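/- arXiv:2212.03201 — 8 statements merged into one kernel-verified Lean document; each statement's English description precedes it below -/
import Mathlib

section
/- Let ℛ, X, Y be types, P an equivalence relation on ℛ, f, g : ℛ → X, and h : X → Y. If f is not P-robust to misspecification with g, and the range of g is contained in the range of f, then h ∘ f is not P-robust to misspecification with h ∘ g. -/
/-- `f` is `P`-admissible: `f R₁ = f R₂` implies `P R₁ R₂`. -/
def PAdmissible {R : Type*} {X : Type*} (P : R → R → Prop) (f : R → X) : Prop :=
  ∀ R₁ R₂ : R, f R₁ = f R₂ → P R₁ R₂

/-- `f` is `P`-robust to misspecification with `g`. -/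
def PRobust {R : Type*} {X : Type*} (P : R → R → Prop) (f g : R → X) : Prop :=
  PAdmissible P f ∧ f ≠ g ∧ Set.range g ⊆ Set.range f ∧
    ∀ R₁ R₂ : R, f R₁ = g R₂ → P R₁ R₂

theorem stmt_0 {R X Y : Type*} (P : R → R → Prop) (hP : Equivalence P)
    (f g : R → X) (h : X → Y)
    (hnr : ¬ PRobust P f g) (hrange : Set.range g ⊆ Set.range f) :
    ¬ PRobust P (h ∘ f) (h ∘ g) := by
  intro ⟨hadm, hne, _, hrob⟩
  apply hnr
  refine ⟨fun R₁ R₂ e => hadm R₁ R₂ (congrArg h e), ?_, hrange,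
    fun R₁ R₂ e => hrob R₁ R₂ (congrArg h e)⟩
  intro heq; exact hne (by rw [heq])
end

section
/- Let ℛ, X be types, P an equivalence relation on ℛ, and f : ℛ → X be P-admissible. Then for any g : ℛ → X, f is P-robust to misspecification with g if and only if there exists a reward transformation t : ℛ → ℛ that preserves P such that g = f ∘ t and f ∘ t ≠ f. -/
theorem stmt_1 {R X : Type*} (P : R → R → Prop) (hP : Equivalence P)
    (f : R → X) (hadm : PAdmissible P f) (g : R → X) :
    PRobust P f g ↔
      ∃ t : R → R, (∀ r : R, P (t r) r) ∧ g = f ∘ t ∧ f ∘ t ≠ f := by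
  constructor
  · rintro ⟨_, hne, hrange, hrel⟩
    choose t ht using fun r => hrange (Set.mem_range_self (f := g) r)
    have hgt : g = f ∘ t := funext fun r => (ht r).symm
    exact ⟨t, fun r => hrel _ _ (ht r), hgt, fun h => hne (by rw [← h, hgt])⟩
  · rintro ⟨t, hpt, hg, hne⟩
    refine ⟨hadm, fun h => hne (hg ▸ h.symm), ?_, ?_⟩
    · rintro x ⟨r, rfl⟩; exact ⟨t r, by rw [hg]; rfl⟩
    · intro R₁ R₂ h
      have : f R₁ = f (t R₂) := by rw [h, hg]; rfl
      exact hP.trans (hadm _ _ this) (hpt R₂)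
end

section
/- Let ℛ, X be types, P an equivalence relation on ℛ, and f, g : ℛ → X. If f is P-robust to misspecification with g, then g is P-admissible. -/
theorem stmt_2 {R X : Type*} (P : R → R → Prop) (hP : Equivalence P)
    (f g : R → X) (hrob : PRobust P f g) :
    PAdmissible P g := by
  obtain ⟨hadm, hne, hrange, hrel⟩ := hrob
  intro R₁ R₂ h
  obtain ⟨R', hR'⟩ := hrange ⟨R₁, rfl⟩
  exact hP.trans (hP.symm (hrel R' R₁ hR')) (hrel R' R₂ (hR'.trans h))
end

section
/- Let ℛ, X be types, P an equivalence relation on ℛ, and f, g : ℛ → X. If f is P-robust to misspecification with g and the range of f equals the range of g, then g is P-robust to misspecification with f. -/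
theorem stmt_3 {R X : Type*} (P : R → R → Prop) (hP : Equivalence P)
    (f g : R → X) (hrob : PRobust P f g) (hrange : Set.range f = Set.range g) :
    PRobust P g f := by
  obtain ⟨hadm, hne, hsub, hcross⟩ := hrob
  have gadm : PAdmissible P g := by
    intro R₁ R₂ h
    obtain ⟨R', hR'⟩ := hsub ⟨R₁, rfl⟩
    exact hP.trans (hP.symm (hcross R' R₁ hR')) (hcross R' R₂ (hR'.trans h))
  exact ⟨gadm, fun h => hne h.symm, hrange.le, fun R₁ R₂ h => hP.symm (hcross R₂ R₁ h.symm)⟩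
end

section
/- Let ℛ, X be types, P an equivalence relation on ℛ, and f : ℛ → X. Then the following are equivalent: (a) f is P-admissible and there exists no g : ℛ → X such that f is P-robust to misspecification with g; (b) the ambiguity Am(f) equals P, i.e., for all R1, R2 : ℛ, f(R1) = f(R2) if and only if P R1 R2. -/
theorem stmt_4 {R X : Type*} (P : R → R → Prop) (hP : Equivalence P)
    (f : R → X) :
    (PAdmissible P f ∧ ¬ ∃ g : R → X, PRobust P f g) ↔
      (∀ R₁ R₂ : R, f R₁ = f R₂ ↔ P R₁ R₂) := by
  classical
  constructor
  · rintro ⟨hadm, hno⟩ R₁ R₂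
    constructor
    · exact hadm R₁ R₂
    · intro hPR
      by_contra hne
      apply hno
      refine ⟨fun r => if f r = f R₂ then f R₁ else f r, hadm, ?_, ?_, ?_⟩
      · intro hfg
        have := congrFun hfg R₂
        simp at this
        exact hne this.symm
      · rintro x ⟨r, rfl⟩
        by_cases h : f r = f R₂
        · simp [h]
        · simp [h]
      · intro A B hAB
        by_cases h : f B = f R₂
        · simp [h] at hAB
          exact hP.trans (hadm A R₁ hAB) (hP.trans hPR (hP.symm (hadm B R₂ h)))
        · simp [h] at hAB
          exact hadm A B hAB
  · intro hAm
    refine ⟨fun R₁ R₂ h => (hAm R₁ R₂).mp h, ?_⟩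
    rintro ⟨g, hadm, hfg, hrange, hrob⟩
    apply hfg
    funext r
    obtain ⟨r', hr'⟩ := hrange ⟨r, rfl⟩
    have := (hAm r' r).mpr (hrob r' r hr')
    rw [← this, hr']
end

section
/- Let ℛ, X be types, P an equivalence relation on ℛ, Ĥ ⊆ ℛ, and f, g : ℛ → X. If f is P-robust to misspecification with g on Ĥ, and f is P-admissible (on all of ℛ), then there exists g' : ℛ → X with g'(R) = g(R) for all R ∈ Ĥ such that f is P-robust to misspecification with g' (on all of ℛ). -/
/-- `f` is `P`-admissible on a subset `H`. -/
def PAdmissibleOn {R : Type*} {X : Type*} (P : R → R → Prop) (f : R → X) (H : Set R) : Prop :=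
  ∀ R₁ ∈ H, ∀ R₂ ∈ H, f R₁ = f R₂ → P R₁ R₂

/-- `f` is `P`-robust to misspecification with `g` on a subset `H`. -/
def PRobustOn {R : Type*} {X : Type*} (P : R → R → Prop) (f g : R → X) (H : Set R) : Prop :=
  PAdmissibleOn P f H ∧ (∃ r ∈ H, f r ≠ g r) ∧ g '' H ⊆ f '' H ∧
    ∀ R₁ ∈ H, ∀ R₂ ∈ H, f R₁ = g R₂ → P R₁ R₂

theorem stmt_5 {R X : Type*} (P : R → R → Prop) (hP : Equivalence P)
    (H : Set R) (f g : R → X)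
    (hrob : PRobustOn P f g H) (hadm : PAdmissible P f) :
    ∃ g' : R → X, (∀ r ∈ H, g' r = g r) ∧ PRobust P f g' := by
  classical
  obtain ⟨hadmOn, ⟨r₀, hr₀, hne₀⟩, hrange, hcond⟩ := hrob
  refine ⟨fun r => if r ∈ H then g r else f r, fun r hr => if_pos hr, hadm, ?_, ?_, ?_⟩
  · intro h
    apply hne₀
    have := congrFun h r₀
    simpa [if_pos hr₀] using this
  · rintro x ⟨r, rfl⟩
    by_cases hr : r ∈ H
    · simp only [if_pos hr]
      obtain ⟨s, _, hs⟩ := hrange ⟨r, hr, rfl⟩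
      exact ⟨s, hs⟩
    · simp only [if_neg hr]
      exact ⟨r, rfl⟩
  · intro R₁ R₂ h
    by_cases hr : R₂ ∈ H
    · simp only [if_pos hr] at h
      obtain ⟨s, hs, hfs⟩ := hrange ⟨R₂, hr, rfl⟩
      exact hP.trans (hadm _ _ (h.trans hfs.symm)) (hcond s hs R₂ hr hfs)
    · simp only [if_neg hr] at h
      exact hadm _ _ h
end

section
/- For all R1, R2 ∈ ℛ: R1 ≡_ORD R2 if and only if there exist a constant c > 0 and a function Φ : S → ℝ such that for all (s,a) ∈ S×A, ∑_{s'∈S} τ(s,a)(s')·R2(s,a,s') = ∑_{s'∈S} τ(s,a)(s')·(c·R1(s,a,s') + γ·Φ(s')) − Φ(s). (Equivalently: R2 is obtained from R1 by some composition, in any order, of positive linear scaling, potential shaping with discount γ, and S'-redistribution with respect to τ.) -/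
open scoped BigOperators

/-- A probability vector on a finite type. -/
def IsProbVec {X : Type} [Fintype X] (p : X → ℝ) : Prop :=
  (∀ x, 0 ≤ p x) ∧ ∑ x, p x = 1

/-- A (stationary) policy: a probability vector over actions for each state. -/
def Policy (S A : Type) [Fintype A] : Type :=
  {p : S → A → ℝ // ∀ s, IsProbVec (p s)}

/-- The transition matrix `P_π` induced by a policy `π` under transition function `τ`. -/
noncomputable def Pmat {S A : Type} [Fintype S] [Fintype A]
    (τ : S → A → S → ℝ) (π : Policy S A) : Matrix S S ℝ :=
  Matrix.of fun s s' => ∑ a, π.1 s a * τ s a s'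

/-- The state distribution `ι P_π^t` at time `t`. -/
noncomputable def stateDist {S A : Type} [Fintype S] [DecidableEq S] [Fintype A]
    (τ : S → A → S → ℝ) (ι : S → ℝ) (π : Policy S A) (t : ℕ) : S → ℝ :=
  Matrix.vecMul ι (Pmat τ π ^ t)

/-- The expected one-step reward `r_{R,π}`. -/
noncomputable def rvec {S A : Type} [Fintype S] [Fintype A]
    (τ : S → A → S → ℝ) (R : S → A → S → ℝ) (π : Policy S A) (s : S) : ℝ :=
  ∑ a, π.1 s a * ∑ s', τ s a s' * R s a s'

/-- The policy evaluation function `J_R(π)`. -/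
noncomputable def Jval {S A : Type} [Fintype S] [DecidableEq S] [Fintype A]
    (τ : S → A → S → ℝ) (ι : S → ℝ) (γ : ℝ) (R : S → A → S → ℝ)
    (π : Policy S A) : ℝ :=
  ∑' t : ℕ, γ ^ t * ∑ s, stateDist τ ι π t s * rvec τ R π s

/-- Every state is reachable under `τ` and `ι`. -/
def AllReachable {S A : Type} [Fintype S] [DecidableEq S] [Fintype A]
    (τ : S → A → S → ℝ) (ι : S → ℝ) : Prop :=
  ∀ s : S, ∃ (π : Policy S A) (t : ℕ), 0 < stateDist τ ι π t s

/-- `π` is an optimal policy for `R`. -/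
def IsOptimal {S A : Type} [Fintype S] [DecidableEq S] [Fintype A]
    (τ : S → A → S → ℝ) (ι : S → ℝ) (γ : ℝ) (R : S → A → S → ℝ)
    (π : Policy S A) : Prop :=
  ∀ π' : Policy S A, Jval τ ι γ R π' ≤ Jval τ ι γ R π

/-- `R₁ ≡_OPT R₂`: the same policies are optimal for `R₁` and `R₂`. -/
def EquivOPT {S A : Type} [Fintype S] [DecidableEq S] [Fintype A]
    (τ : S → A → S → ℝ) (ι : S → ℝ) (γ : ℝ) (R₁ R₂ : S → A → S → ℝ) : Prop :=
  ∀ π : Policy S A, IsOptimal τ ι γ R₁ π ↔ IsOptimal τ ι γ R₂ π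

/-- `R₁ ≡_ORD R₂`: `R₁` and `R₂` induce the same ordering of policies. -/
def EquivORD {S A : Type} [Fintype S] [DecidableEq S] [Fintype A]
    (τ : S → A → S → ℝ) (ι : S → ℝ) (γ : ℝ) (R₁ R₂ : S → A → S → ℝ) : Prop :=
  ∀ π π' : Policy S A,
    (Jval τ ι γ R₁ π' < Jval τ ι γ R₁ π ↔ Jval τ ι γ R₂ π' < Jval τ ι γ R₂ π)

/-!
Write `q_R(s,a) = ∑_{s'} τ(s,a)(s') R(s,a,s')` and let `m_π(s,a) = ∑_t γ^t (ι P_π^t)(s) π(a|s)`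
be the discounted occupancy measure of `π`, so that `J_R(π) = ⟨m_π, q_R⟩`. The occupancy measures
are exactly the nonnegative solutions of the flow equations `m F = ι`, where `F = flowMatrix τ γ`
has entries `F((s,a),s') = [s = s'] - γ τ(s,a)(s')`. Shaping by a potential `Φ` changes `q_R` by
`-F Φ`, hence `J_R` by the constant `-⟨m_π F, Φ⟩ = -⟨ι, Φ⟩`; this gives one direction.

Conversely, reachability makes the occupancy measure of the uniform policy strictly positive, so it
can be moved a little in any direction `z` with `z F = 0` and remain an occupancy measure. Order
equivalence then forces `⟨z, q₁⟩` and `⟨z, q₂⟩` to have the same sign for all such `z`, so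
`q₂ = c q₁` on `ker (· F)` for some `c > 0`. Being orthogonal to `ker (· F)`, the vector
`q₂ - c q₁` lies in the range of `F`, i.e. it is a shaping term.
-/

open Matrix Finset Topology

lemma exists_mulVec_eq_of_forall_vecMul_eq_zero {m n K : Type*} [Fintype m] [Fintype n]
    [DecidableEq m] [Field K] (M : Matrix m n K) (q : m → K)
    (h : ∀ z, z ᵥ* M = 0 → z ⬝ᵥ q = 0) : ∃ Φ, M *ᵥ Φ = q := by
  let L : n → Module.Dual K (m → K) := fun j => dotProductEquiv K m (fun i => M i j)
  have hker : ⨅ j, LinearMap.ker (L j) ≤ LinearMap.ker (dotProductEquiv K m q) := by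
    intro z hz
    simp only [Submodule.mem_iInf, LinearMap.mem_ker] at hz
    have hzM : z ᵥ* M = 0 := funext fun j => by
      simpa [L, vecMul, dotProduct_comm] using hz j
    simpa [dotProduct_comm] using h z hzM
  obtain ⟨Φ, hΦ⟩ := (Submodule.mem_span_range_iff_exists_fun K).1 (mem_span_of_iInf_ker_le_ker hker)
  refine ⟨Φ, (dotProductEquiv K m).injective ?_⟩
  rw [← hΦ]
  ext z
  simp [L, mulVec, dotProduct, mul_sum, Pi.single_apply, mul_comm]

lemma exists_pos_eq_mul_of_pos_iff {𝕜 E : Type*} [Field 𝕜] [LinearOrder 𝕜] [IsStrictOrderedRing 𝕜]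
    [AddCommGroup E] [Module 𝕜 E] (p : Submodule 𝕜 E) (f g : E →ₗ[𝕜] 𝕜)
    (h : ∀ x ∈ p, 0 < f x ↔ 0 < g x) : ∃ c, 0 < c ∧ ∀ x ∈ p, g x = c * f x := by
  have hzero : ∀ x ∈ p, f x = 0 → g x = 0 := by
    intro x hx hfx
    rcases lt_trichotomy (g x) 0 with hneg | hzero | hpos
    · have := (h (-x) (p.neg_mem hx)).2 (by simpa using hneg)
      simp [hfx] at this
    · exact hzero
    · have := (h x hx).2 hpos
      simp [hfx] at this
  by_cases hf : ∃ x₀ ∈ p, 0 < f x₀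
  · obtain ⟨x₀, hx₀, hfx₀⟩ := hf
    refine ⟨g x₀ / f x₀, div_pos ((h x₀ hx₀).1 hfx₀) hfx₀, fun x hx => ?_⟩
    have hy : g (f x₀ • x - f x • x₀) = 0 :=
      hzero _ (p.sub_mem (p.smul_mem _ hx) (p.smul_mem _ hx₀))
        (by simp only [map_sub, map_smul, smul_eq_mul]; ring)
    simp only [map_sub, map_smul, smul_eq_mul] at hy
    field_simp
    linarith
  · simp only [not_exists, not_and, not_lt] at hf
    refine ⟨1, one_pos, fun x hx => ?_⟩
    have hfx : f x = 0 := le_antisymm (hf x hx) (by simpa using hf (-x) (p.neg_mem hx))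
    rw [hzero x hx hfx, hfx, mul_zero]

lemma isProbVec_uniform {X : Type} [Fintype X] [Nonempty X] :
    IsProbVec (fun _ : X => (Fintype.card X : ℝ)⁻¹) :=
  ⟨fun _ => by positivity, by simp [card_univ]⟩

lemma IsProbVec.le_one {X : Type} [Fintype X] {p : X → ℝ} (hp : IsProbVec p) (x : X) :
    p x ≤ 1 :=
  hp.2 ▸ single_le_sum (fun y _ => hp.1 y) (mem_univ x)

lemma exists_isProbVec_smul_eq {X : Type} [Fintype X] [Nonempty X] {w : X → ℝ}
    (hw : ∀ x, 0 ≤ w x) : ∃ p, IsProbVec p ∧ w = (∑ x, w x) • p := by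
  by_cases h : ∑ x, w x = 0
  · refine ⟨_, isProbVec_uniform, ?_⟩
    rw [h, zero_smul]
    funext x
    exact (sum_eq_zero_iff_of_nonneg fun y _ => hw y).1 h x (mem_univ x)
  · refine ⟨(∑ x, w x)⁻¹ • w, ⟨fun x => ?_, ?_⟩, ?_⟩
    · exact mul_nonneg (inv_nonneg.2 (sum_nonneg fun y _ => hw y)) (hw x)
    · simp [← mul_sum, h]
    · rw [smul_smul, mul_inv_cancel₀ h, one_smul]

lemma exists_pos_nonneg_add_smul {ι : Type*} [Finite ι] {m : ι → ℝ} (hm : ∀ i, 0 < m i)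
    (z : ι → ℝ) : ∃ ε : ℝ, 0 < ε ∧ ∀ i, 0 ≤ (m + ε • z) i := by
  have hnear : ∀ᶠ ε in 𝓝 (0 : ℝ), ∀ i, 0 < m i + ε * z i :=
    Filter.eventually_all.2 fun i =>
      ((continuous_const.add (continuous_id.mul continuous_const)).tendsto' 0 (m i)
        (by simp)).eventually (lt_mem_nhds (hm i))
  obtain ⟨ε, hε, hεpos⟩ := ((hnear.filter_mono nhdsWithin_le_nhds).and
    (self_mem_nhdsWithin (s := Set.Ioi 0))).exists
  exact ⟨ε, hεpos, fun i => (hε i).le⟩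

lemma eq_of_sub_smul_vecMul_eq {n : Type*} [Fintype n] [DecidableEq n] {P : Matrix n n ℝ}
    (hP : P ∈ rowStochastic ℝ n) {γ : ℝ} (hγ0 : 0 ≤ γ) (hγ1 : γ < 1) {x y : n → ℝ}
    (h : x - γ • (x ᵥ* P) = y - γ • (y ᵥ* P)) : x = y := by
  set z := x - y with hzdef
  have hz : z = γ • (z ᵥ* P) := by
    rw [sub_vecMul, smul_sub]
    exact sub_eq_sub_iff_sub_eq_sub.1 h
  have hle : ∑ i, |z i| ≤ γ * ∑ i, |z i| := calc
    ∑ i, |z i| = ∑ j, γ * |(z ᵥ* P) j| := by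
        conv_lhs => rw [hz]
        simp [abs_mul, abs_of_nonneg hγ0]
    _ ≤ ∑ j, γ * ∑ i, |z i| * P i j := by
        gcongr with j
        refine (abs_sum_le_sum_abs _ _).trans_eq (sum_congr rfl fun i _ => ?_)
        rw [abs_mul, abs_of_nonneg (nonneg_of_mem_rowStochastic hP)]
    _ = γ * ∑ i, |z i| := by
        rw [← mul_sum, sum_comm]
        simp [← mul_sum, sum_row_of_mem_rowStochastic hP]
  have hzero : ∑ i, |z i| = 0 :=
    le_antisymm (by nlinarith [sum_nonneg fun i (_ : i ∈ univ) => abs_nonneg (z i)])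
      (sum_nonneg fun i _ => abs_nonneg _)
  funext i
  have := (sum_eq_zero_iff_of_nonneg fun i _ => abs_nonneg (z i)).1 hzero i (mem_univ i)
  rwa [abs_eq_zero, hzdef, Pi.sub_apply, sub_eq_zero] at this

section Shaping

variable {S A : Type} [Fintype S] [DecidableEq S] {τ : S → A → S → ℝ} {γ : ℝ}

def expectedReward (τ : S → A → S → ℝ) (R : S → A → S → ℝ) (p : S × A) : ℝ :=
  ∑ s', τ p.1 p.2 s' * R p.1 p.2 s'

def flowMatrix (τ : S → A → S → ℝ) (γ : ℝ) : Matrix (S × A) S ℝ :=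
  of fun p s => (if p.1 = s then 1 else 0) - γ * τ p.1 p.2 s

lemma flowMatrix_mulVec_apply (Φ : S → ℝ) (s : S) (a : A) :
    (flowMatrix τ γ *ᵥ Φ) (s, a) = Φ s - γ * ∑ s', τ s a s' * Φ s' := by
  simp [flowMatrix, mulVec, dotProduct, sub_mul, mul_sum, mul_assoc]

lemma forall_sum_mul_eq_iff_expectedReward_eq (R₁ R₂ : S → A → S → ℝ) (c : ℝ) (Φ : S → ℝ) :
    (∀ s a, ∑ s', τ s a s' * R₂ s a s' =
        (∑ s', τ s a s' * (c * R₁ s a s' + γ * Φ s')) - Φ s) ↔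
      expectedReward τ R₂ = c • expectedReward τ R₁ - flowMatrix τ γ *ᵥ Φ := by
  rw [funext_iff, Prod.forall]
  refine forall₂_congr fun s a => ?_
  have hsplit : ∑ s', τ s a s' * (c * R₁ s a s' + γ * Φ s')
      = c * expectedReward τ R₁ (s, a) + γ * ∑ s', τ s a s' * Φ s' := by
    simp only [expectedReward, mul_sum, ← sum_add_distrib]
    exact sum_congr rfl fun _ _ => by ring
  rw [hsplit, Pi.sub_apply, flowMatrix_mulVec_apply, Pi.smul_apply, smul_eq_mul,
    sub_sub_eq_add_sub]
  rfl

end Shaping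

noncomputable def uniformPolicy (S A : Type) [Fintype A] [Nonempty A] : Policy S A :=
  ⟨fun _ _ => (Fintype.card A : ℝ)⁻¹, fun _ => isProbVec_uniform⟩

lemma Pmat_le_card_mul_Pmat_uniformPolicy {S A : Type} [Fintype S] [Fintype A] [Nonempty A]
    {τ : S → A → S → ℝ} (hτ : ∀ s a, IsProbVec (τ s a)) (π : Policy S A) (s s' : S) :
    Pmat τ π s s' ≤ Fintype.card A * Pmat τ (uniformPolicy S A) s s' := by
  have hcard : (Fintype.card A : ℝ) ≠ 0 := Nat.cast_ne_zero.2 Fintype.card_ne_zero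
  simp only [Pmat, uniformPolicy, of_apply, mul_sum, mul_inv_cancel_left₀ hcard]
  exact sum_le_sum fun a _ => mul_le_of_le_one_left ((hτ s a).1 s') ((π.2 s).le_one a)

section Occupancy

variable {S A : Type} [Fintype S] [DecidableEq S] [Fintype A] {τ : S → A → S → ℝ} {ι : S → ℝ}
  {γ : ℝ}

lemma Pmat_mem_rowStochastic (hτ : ∀ s a, IsProbVec (τ s a)) (π : Policy S A) :
    Pmat τ π ∈ rowStochastic ℝ S := by
  refine mem_rowStochastic_iff_sum.2 ⟨fun s s' =>
    sum_nonneg fun a _ => mul_nonneg ((π.2 s).1 a) ((hτ s a).1 s'), fun s => ?_⟩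
  simp only [Pmat, of_apply]
  rw [sum_comm]
  simp [← mul_sum, (hτ _ _).2, (π.2 s).2]

lemma stateDist_succ (π : Policy S A) (t : ℕ) :
    stateDist τ ι π (t + 1) = stateDist τ ι π t ᵥ* Pmat τ π := by
  rw [stateDist, pow_succ, ← vecMul_vecMul]
  rfl

lemma isProbVec_stateDist (hτ : ∀ s a, IsProbVec (τ s a)) (hι : IsProbVec ι)
    (π : Policy S A) (t : ℕ) : IsProbVec (stateDist τ ι π t) := by
  have hP := pow_mem (Pmat_mem_rowStochastic hτ π) t
  refine ⟨nonneg_vecMul_of_mem_rowStochastic hP hι.1, ?_⟩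
  simpa [dotProduct, stateDist] using
    vecMul_dotProduct_one_eq_one_rowStochastic hP (x := ι) (by simpa [dotProduct] using hι.2)

lemma summable_stateDist (hτ : ∀ s a, IsProbVec (τ s a)) (hι : IsProbVec ι)
    (hγ0 : 0 ≤ γ) (hγ1 : γ < 1) (π : Policy S A) (s : S) :
    Summable fun t => γ ^ t * stateDist τ ι π t s :=
  (summable_geometric_of_lt_one hγ0 hγ1).of_nonneg_of_le
    (fun t => mul_nonneg (pow_nonneg hγ0 t) ((isProbVec_stateDist hτ hι π t).1 s))
    (fun t => mul_le_of_le_one_right (pow_nonneg hγ0 t) ((isProbVec_stateDist hτ hι π t).le_one s))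

noncomputable def stateOccupancy (τ : S → A → S → ℝ) (ι : S → ℝ) (γ : ℝ) (π : Policy S A)
    (s : S) : ℝ :=
  ∑' t, γ ^ t * stateDist τ ι π t s

noncomputable def occupancy (τ : S → A → S → ℝ) (ι : S → ℝ) (γ : ℝ) (π : Policy S A)
    (p : S × A) : ℝ :=
  stateOccupancy τ ι γ π p.1 * π.1 p.1 p.2

lemma stateOccupancy_sub_smul_vecMul (hτ : ∀ s a, IsProbVec (τ s a)) (hι : IsProbVec ι)
    (hγ0 : 0 ≤ γ) (hγ1 : γ < 1) (π : Policy S A) :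
    stateOccupancy τ ι γ π - γ • (stateOccupancy τ ι γ π ᵥ* Pmat τ π) = ι := by
  funext s
  have hshift : ∀ t, γ ^ (t + 1) * stateDist τ ι π (t + 1) s
      = γ * ∑ s', γ ^ t * stateDist τ ι π t s' * Pmat τ π s' s := fun t => by
    rw [stateDist_succ, vecMul, dotProduct, mul_sum, mul_sum]
    exact sum_congr rfl fun _ _ => by ring
  rw [Pi.sub_apply, sub_eq_iff_eq_add, stateOccupancy,
    (summable_stateDist hτ hι hγ0 hγ1 π s).tsum_eq_zero_add, tsum_congr hshift, tsum_mul_left,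
    Summable.tsum_finsetSum fun s' _ => (summable_stateDist hτ hι hγ0 hγ1 π s').mul_right _]
  simp [stateDist, stateOccupancy, vecMul, dotProduct, tsum_mul_right, one_apply]

lemma vecMul_flowMatrix (π : Policy S A) (μ : S → ℝ) :
    (fun p : S × A => μ p.1 * π.1 p.1 p.2) ᵥ* flowMatrix τ γ = μ - γ • (μ ᵥ* Pmat τ π) := by
  funext s
  simp only [vecMul, dotProduct, flowMatrix, Pmat, of_apply, Fintype.sum_prod_type,
    Pi.sub_apply, Pi.smul_apply, smul_eq_mul, mul_sub, sum_sub_distrib, mul_sum]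
  congr 1
  · simp [← mul_sum, (π.2 _).2]
  · exact sum_congr rfl fun _ _ => sum_congr rfl fun _ _ => by ring

lemma occupancy_vecMul_flowMatrix (hτ : ∀ s a, IsProbVec (τ s a)) (hι : IsProbVec ι)
    (hγ0 : 0 ≤ γ) (hγ1 : γ < 1) (π : Policy S A) :
    occupancy τ ι γ π ᵥ* flowMatrix τ γ = ι :=
  (vecMul_flowMatrix π _).trans (stateOccupancy_sub_smul_vecMul hτ hι hγ0 hγ1 π)

lemma exists_occupancy_eq [Nonempty A] (hτ : ∀ s a, IsProbVec (τ s a)) (hι : IsProbVec ι)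
    (hγ0 : 0 ≤ γ) (hγ1 : γ < 1) {m : S × A → ℝ} (hm : ∀ p, 0 ≤ m p)
    (hflow : m ᵥ* flowMatrix τ γ = ι) : ∃ π : Policy S A, occupancy τ ι γ π = m := by
  choose p hp hmp using fun s => exists_isProbVec_smul_eq fun a => hm (s, a)
  let π : Policy S A := ⟨p, hp⟩
  have hm_eq : m = fun q => (∑ a, m (q.1, a)) * π.1 q.1 q.2 :=
    funext fun q => congrFun (hmp q.1) q.2
  have hμ : (fun s => ∑ a, m (s, a)) = stateOccupancy τ ι γ π := by
    refine eq_of_sub_smul_vecMul_eq (Pmat_mem_rowStochastic hτ π) hγ0 hγ1 ?_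
    rw [← vecMul_flowMatrix, ← hm_eq, hflow, stateOccupancy_sub_smul_vecMul hτ hι hγ0 hγ1]
  refine ⟨π, funext fun q => ?_⟩
  rw [congrFun hm_eq q, occupancy, ← hμ]

lemma stateDist_le_card_pow_mul [Nonempty A] (hτ : ∀ s a, IsProbVec (τ s a))
    (hι : IsProbVec ι) (π : Policy S A) (t : ℕ) (s : S) :
    stateDist τ ι π t s ≤ Fintype.card A ^ t * stateDist τ ι (uniformPolicy S A) t s := by
  induction t generalizing s with
  | zero => simp [stateDist]
  | succ t ih =>
    simp only [stateDist_succ, vecMul, dotProduct, mul_sum]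
    refine sum_le_sum fun s' _ => ?_
    calc stateDist τ ι π t s' * Pmat τ π s' s
        ≤ (Fintype.card A ^ t * stateDist τ ι (uniformPolicy S A) t s')
          * (Fintype.card A * Pmat τ (uniformPolicy S A) s' s) :=
          mul_le_mul (ih s') (Pmat_le_card_mul_Pmat_uniformPolicy hτ π s' s)
            (nonneg_of_mem_rowStochastic (Pmat_mem_rowStochastic hτ π))
            (mul_nonneg (by positivity) ((isProbVec_stateDist hτ hι _ t).1 s'))
      _ = _ := by ring

lemma occupancy_uniformPolicy_pos [Nonempty A] (hτ : ∀ s a, IsProbVec (τ s a))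
    (hι : IsProbVec ι) (hγ0 : 0 < γ) (hγ1 : γ < 1) (hreach : AllReachable τ ι)
    (p : S × A) : 0 < occupancy τ ι γ (uniformPolicy S A) p := by
  obtain ⟨π, t, hpos⟩ := hreach p.1
  have hd : 0 < stateDist τ ι (uniformPolicy S A) t p.1 :=
    pos_of_mul_pos_right (hpos.trans_le (stateDist_le_card_pow_mul hτ hι π t p.1))
      (by positivity)
  have hocc : 0 < stateOccupancy τ ι γ (uniformPolicy S A) p.1 :=
    (mul_pos (pow_pos hγ0 t) hd).trans_le <|
      (summable_stateDist hτ hι hγ0.le hγ1 _ p.1).le_tsum t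
        fun j _ => mul_nonneg (pow_nonneg hγ0.le j) ((isProbVec_stateDist hτ hι _ j).1 _)
  exact mul_pos hocc (inv_pos.2 (Nat.cast_pos.2 Fintype.card_pos))

lemma Jval_eq_occupancy_dotProduct (hτ : ∀ s a, IsProbVec (τ s a)) (hι : IsProbVec ι)
    (hγ0 : 0 ≤ γ) (hγ1 : γ < 1) (R : S → A → S → ℝ) (π : Policy S A) :
    Jval τ ι γ R π = occupancy τ ι γ π ⬝ᵥ expectedReward τ R := by
  have hdist : ∀ t, γ ^ t * ∑ s, stateDist τ ι π t s * rvec τ R π s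
      = ∑ s, γ ^ t * stateDist τ ι π t s * rvec τ R π s := fun t => by
    simp only [mul_sum, mul_assoc]
  rw [Jval, tsum_congr hdist,
    Summable.tsum_finsetSum fun s _ => (summable_stateDist hτ hι hγ0 hγ1 π s).mul_right _,
    dotProduct, Fintype.sum_prod_type]
  refine sum_congr rfl fun s _ => ?_
  rw [tsum_mul_right, rvec, mul_sum]
  exact sum_congr rfl fun a _ => by
    simp only [occupancy, expectedReward, stateOccupancy]
    ring

lemma pos_dotProduct_iff_of_equivORD [Nonempty A] (hτ : ∀ s a, IsProbVec (τ s a))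
    (hι : IsProbVec ι) (hγ0 : 0 < γ) (hγ1 : γ < 1) (hreach : AllReachable τ ι)
    {R₁ R₂ : S → A → S → ℝ} (hORD : EquivORD τ ι γ R₁ R₂) {z : S × A → ℝ}
    (hz : z ᵥ* flowMatrix τ γ = 0) :
    0 < z ⬝ᵥ expectedReward τ R₁ ↔ 0 < z ⬝ᵥ expectedReward τ R₂ := by
  obtain ⟨ε, hε, hnonneg⟩ :=
    exists_pos_nonneg_add_smul (occupancy_uniformPolicy_pos hτ hι hγ0 hγ1 hreach) z
  obtain ⟨π, hπ⟩ := exists_occupancy_eq hτ hι hγ0.le hγ1 hnonneg (by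
    rw [add_vecMul, smul_vecMul, hz, smul_zero, add_zero,
      occupancy_vecMul_flowMatrix hτ hι hγ0.le hγ1])
  have hJ : ∀ R, Jval τ ι γ R π
      = Jval τ ι γ R (uniformPolicy S A) + ε * (z ⬝ᵥ expectedReward τ R) := fun R => by
    simp only [Jval_eq_occupancy_dotProduct hτ hι hγ0.le hγ1, hπ, add_dotProduct,
      smul_dotProduct, smul_eq_mul]
  have := hORD π (uniformPolicy S A)
  rwa [hJ, hJ, lt_add_iff_pos_right, lt_add_iff_pos_right, mul_pos_iff_of_pos_left hε,
    mul_pos_iff_of_pos_left hε] at this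

lemma Jval_eq_of_expectedReward_eq (hτ : ∀ s a, IsProbVec (τ s a)) (hι : IsProbVec ι)
    (hγ0 : 0 ≤ γ) (hγ1 : γ < 1) {R₁ R₂ : S → A → S → ℝ} {c : ℝ} {Φ : S → ℝ}
    (h : expectedReward τ R₂ = c • expectedReward τ R₁ - flowMatrix τ γ *ᵥ Φ)
    (π : Policy S A) : Jval τ ι γ R₂ π = c * Jval τ ι γ R₁ π - ι ⬝ᵥ Φ := by
  simp only [Jval_eq_occupancy_dotProduct hτ hι hγ0 hγ1]
  rw [h, dotProduct_sub, dotProduct_smul, dotProduct_mulVec,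
    occupancy_vecMul_flowMatrix hτ hι hγ0 hγ1, smul_eq_mul]

end Occupancy

theorem stmt_7_general {S A : Type} [Fintype S] [DecidableEq S] [Fintype A]
    [Nonempty A]
    (τ : S → A → S → ℝ) (hτ : ∀ s a, IsProbVec (τ s a))
    (ι : S → ℝ) (hι : IsProbVec ι)
    (γ : ℝ) (hγ0 : 0 < γ) (hγ1 : γ < 1)
    (hreach : AllReachable τ ι)
    (R₁ R₂ : S → A → S → ℝ) :
    EquivORD τ ι γ R₁ R₂ ↔
      ∃ c : ℝ, 0 < c ∧ ∃ Φ : S → ℝ, ∀ s a,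
        ∑ s', τ s a s' * R₂ s a s' =
          (∑ s', τ s a s' * (c * R₁ s a s' + γ * Φ s')) - Φ s := by
  classical
  simp only [forall_sum_mul_eq_iff_expectedReward_eq]
  constructor
  · intro hORD
    obtain ⟨c, hc, hprop⟩ := exists_pos_eq_mul_of_pos_iff
      (LinearMap.ker (vecMulLinear (flowMatrix τ γ)))
      (dotProductEquiv ℝ _ (expectedReward τ R₁)) (dotProductEquiv ℝ _ (expectedReward τ R₂))
      fun z hz => by
        simpa [dotProduct_comm] using pos_dotProduct_iff_of_equivORD hτ hι hγ0 hγ1 hreach hORD hz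
    obtain ⟨Φ, hΦ⟩ := exists_mulVec_eq_of_forall_vecMul_eq_zero (flowMatrix τ γ)
      (c • expectedReward τ R₁ - expectedReward τ R₂) fun z hz => by
        have := hprop z hz
        simp only [dotProductEquiv_apply_apply] at this
        simp [dotProduct_comm z, this]
    exact ⟨c, hc, Φ, by rw [hΦ, sub_sub_cancel]⟩
  · rintro ⟨c, hc, Φ, hΦ⟩ π π'
    rw [Jval_eq_of_expectedReward_eq hτ hι hγ0.le hγ1 hΦ,
      Jval_eq_of_expectedReward_eq hτ hι hγ0.le hγ1 hΦ, sub_lt_sub_iff_right,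
      mul_lt_mul_iff_right₀ hc]

theorem stmt_7 {S A : Type} [Fintype S] [DecidableEq S] [Fintype A]
    [Nonempty S] [Nonempty A]
    (τ : S → A → S → ℝ) (hτ : ∀ s a, IsProbVec (τ s a))
    (ι : S → ℝ) (hι : IsProbVec ι)
    (γ : ℝ) (hγ0 : 0 < γ) (hγ1 : γ < 1)
    (hreach : AllReachable τ ι)
    (R₁ R₂ : S → A → S → ℝ) :
    EquivORD τ ι γ R₁ R₂ ↔
      ∃ c : ℝ, 0 < c ∧ ∃ Φ : S → ℝ, ∀ s a,
        ∑ s', τ s a s' * R₂ s a s' =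
          (∑ s', τ s a s' * (c * R₁ s a s' + γ * Φ s')) - Φ s :=
  stmt_7_general τ hτ ι hι γ hγ0 hγ1 hreach R₁ R₂
end

section
/- Let π and π' be policies such that ∑_{t=0}^∞ γ^t (ι P_π^t)(s) > 0 and ∑_{t=0}^∞ γ^t (ι P_{π'}^t)(s) > 0 for every state s ∈ S (i.e., both policies visit every state with positive discounted probability). If m(π) = m(π'), then π = π'. In other words, the occupancy measure map m is injective on the set of policies that visit each state with positive probability. -/
open scoped BigOperators

/-- The occupancy measure map `m : Π → ℝ^{S×A}`. -/
noncomputable def occ {S A : Type} [Fintype S] [DecidableEq S] [Fintype A]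
    (τ : S → A → S → ℝ) (ι : S → ℝ) (γ : ℝ) (π : Policy S A) : S × A → ℝ :=
  fun p => ∑' t : ℕ, γ ^ t * stateDist τ ι π t p.1 * π.1 p.1 p.2

theorem stmt_9 {S A : Type} [Fintype S] [DecidableEq S] [Fintype A]
    [Nonempty S] [Nonempty A]
    (τ : S → A → S → ℝ) (hτ : ∀ s a, IsProbVec (τ s a))
    (ι : S → ℝ) (hι : IsProbVec ι)
    (γ : ℝ) (hγ0 : 0 < γ) (hγ1 : γ < 1)
    (hreach : AllReachable τ ι)
    (π π' : Policy S A)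
    (hπ : ∀ s : S, 0 < ∑' t : ℕ, γ ^ t * stateDist τ ι π t s)
    (hπ' : ∀ s : S, 0 < ∑' t : ℕ, γ ^ t * stateDist τ ι π' t s)
    (hocc : occ τ ι γ π = occ τ ι γ π') :
    π = π' := by
  have key : ∀ (ρ : Policy S A) (s : S) (a : A),
      occ τ ι γ ρ (s, a) = (∑' t : ℕ, γ ^ t * stateDist τ ι ρ t s) * ρ.1 s a := by
    intro ρ s a
    simp only [occ]
    rw [← tsum_mul_right]
  apply Subtype.ext
  funext s a
  have hD : (∑' t : ℕ, γ ^ t * stateDist τ ι π t s) =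
      (∑' t : ℕ, γ ^ t * stateDist τ ι π' t s) := by
    have h1 : ∀ a : A, occ τ ι γ π (s, a) = occ τ ι γ π' (s, a) := by
      intro a; rw [hocc]
    have h2 : ∑ a : A, occ τ ι γ π (s, a) = ∑ a : A, occ τ ι γ π' (s, a) :=
      Finset.sum_congr rfl fun a _ => h1 a
    simpa [key, ← Finset.mul_sum, (π.2 s).2, (π'.2 s).2] using h2
  have h := congrFun hocc (s, a)
  rw [key, key, hD] at h
  exact mul_left_cancel₀ (ne_of_gt (hπ' s)) h
end
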